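/- Let k be a field and X a k-vector space. The map sending an element 𝔘 of the double dual X** to the family of operators (I_B)_{B finite-dimensional}, where I_B : Hom_k(X,B) → B sends f to the unique element b ∈ B satisfying β(b) = 𝔘(β ∘ f) for all β ∈ B*, is a bijection from X** onto the set of natural transformations from the functor (finite-dimensional k-vector spaces) → Set, B ↦ Hom_k(X,B), to the forgetful (underlying set) functor on finite-dimensional k-vector spaces. -/

import Mathlib

open CategoryTheory

universe u

/-- The functor from finite-dimensional `k`-vector spaces to `Set` sending
`B ↦ Hom_k(X, B)`, with postcomposition on maps. -/
def homLinFunctor (k : Type u) [Field k] (X : Type u) [AddCommGroup X] [Module k X] :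
    FGModuleCat k ⥤ Type u where
  obj B := X →ₗ[k] B
  map θ := TypeCat.ofHom fun f => LinearMap.comp (θ.hom.hom : _ →ₗ[k] _) f
  map_id B := rfl
  map_comp θ₁ θ₂ := rfl

variable {k : Type u} [Field k] {X : Type u} [AddCommGroup X] [Module k X]

/-- forward map -/
noncomputable def myToNat (𝔘 : Module.Dual k (Module.Dual k X)) :
    homLinFunctor k X ⟶ forget (FGModuleCat k) where
  app B := TypeCat.ofHom fun (f : X →ₗ[k] B) => (Module.evalEquiv k B).symm (𝔘.comp f.dualMap)
  naturality B C θ := by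
    ext (f : X →ₗ[k] B)
    show (Module.evalEquiv k C).symm (𝔘.comp (((θ.hom.hom : B →ₗ[k] C).comp f).dualMap)) =
        θ.hom.hom ((Module.evalEquiv k B).symm (𝔘.comp f.dualMap))
    apply (Module.evalEquiv k C).injective
    apply LinearMap.ext
    intro γ
    rw [LinearEquiv.apply_symm_apply]
    calc 𝔘 ((((θ.hom.hom : B →ₗ[k] C).comp f).dualMap) γ)
        = (𝔘.comp f.dualMap) (γ.comp (θ.hom.hom : B →ₗ[k] C)) := rfl
      _ = (γ.comp (θ.hom.hom : B →ₗ[k] C))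
            ((Module.evalEquiv k B).symm (𝔘.comp f.dualMap)) :=
          (Module.apply_evalEquiv_symm_apply k B _ _).symm
      _ = (Module.evalEquiv k C)
            (θ.hom.hom ((Module.evalEquiv k B).symm (𝔘.comp f.dualMap))) γ := rfl

theorem myToNat_spec (𝔘 : Module.Dual k (Module.Dual k X)) (B : FGModuleCat k)
    (f : X →ₗ[k] B) (β : Module.Dual k B) :
    β ((myToNat 𝔘).app B f) = 𝔘 (β.comp f) := by
  show β ((Module.evalEquiv k B).symm (𝔘.comp f.dualMap)) = _
  rw [Module.apply_evalEquiv_symm_apply]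
  rfl

/-- inverse map -/
def myOfNat (I : homLinFunctor k X ⟶ forget (FGModuleCat k)) :
    Module.Dual k (Module.Dual k X) where
  toFun ξ := I.app (FGModuleCat.of k k) (ξ : (homLinFunctor k X).obj (FGModuleCat.of k k))
  map_add' ξ η := by
    let f : (homLinFunctor k X).obj (FGModuleCat.of k (k × k)) := ξ.prod η
    let F : FGModuleCat.of k (k × k) ⟶ FGModuleCat.of k k := FGModuleCat.ofHom (LinearMap.fst k k k)
    let S : FGModuleCat.of k (k × k) ⟶ FGModuleCat.of k k := FGModuleCat.ofHom (LinearMap.snd k k k)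
    let A : FGModuleCat.of k (k × k) ⟶ FGModuleCat.of k k :=
      FGModuleCat.ofHom (LinearMap.fst k k k + LinearMap.snd k k k)
    have hA := ConcreteCategory.congr_hom (I.naturality A) f
    have hF := ConcreteCategory.congr_hom (I.naturality F) f
    have hS := ConcreteCategory.congr_hom (I.naturality S) f
    simp only [types_comp_apply] at hA hF hS
    have h1 : (homLinFunctor k X).map A f = ξ + η := by
      apply LinearMap.ext; intro x; rfl
    have h2 : (homLinFunctor k X).map F f = ξ := by
      apply LinearMap.ext; intro x; rfl
    have h3 : (homLinFunctor k X).map S f = η := by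
      apply LinearMap.ext; intro x; rfl
    rw [h1] at hA; rw [h2] at hF; rw [h3] at hS
    refine hA.trans ?_
    beta_reduce
    rw [hF, hS]
    rfl
  map_smul' c ξ := by
    let M : FGModuleCat.of k k ⟶ FGModuleCat.of k k := FGModuleCat.ofHom (c • LinearMap.id)
    have hM := ConcreteCategory.congr_hom (I.naturality M) (@id ((homLinFunctor k X).obj (FGModuleCat.of k k)) ξ)
    simp only [types_comp_apply, id_eq] at hM
    have h1 : (homLinFunctor k X).map M ξ = c • ξ := by
      apply LinearMap.ext; intro x; rfl
    erw [h1] at hM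
    exact hM.trans rfl

theorem myLeftInv (𝔘 : Module.Dual k (Module.Dual k X)) : myOfNat (myToNat 𝔘) = 𝔘 := by
  apply LinearMap.ext
  intro ξ
  exact myToNat_spec 𝔘 (FGModuleCat.of k k) ξ LinearMap.id

theorem myRightInv (I : homLinFunctor k X ⟶ forget (FGModuleCat k)) :
    myToNat (myOfNat I) = I := by
  apply NatTrans.ext
  funext B; ext (f : (homLinFunctor k X).obj B)
  have key : ∀ γ : Module.Dual k B, γ ((myToNat (myOfNat I)).app B f) = γ (I.app B f) := by
    intro γ
    erw [myToNat_spec]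
    let θ : B ⟶ FGModuleCat.of k k := ConcreteCategory.ofHom (C := FGModuleCat k) γ
    have hn := ConcreteCategory.congr_hom (I.naturality θ) f
    simp only [types_comp_apply] at hn
    have h1 : (homLinFunctor k X).map θ f = γ.comp f := rfl
    rw [h1] at hn
    exact hn
  have := (Module.evalEquiv k B).injective (LinearMap.ext key)
  exact this

theorem stmt7 (k : Type u) [Field k] (X : Type u) [AddCommGroup X] [Module k X] :
    ∃ Φ : Module.Dual k (Module.Dual k X) ≃ (homLinFunctor k X ⟶ forget (FGModuleCat k)),
      ∀ (𝔘 : Module.Dual k (Module.Dual k X)) (B : FGModuleCat k) (f : X →ₗ[k] B)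
        (β : Module.Dual k B), β ((Φ 𝔘).app B f) = 𝔘 (β.comp f) := by
  exact ⟨⟨myToNat, myOfNat, myLeftInv, myRightInv⟩, myToNat_spec⟩
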